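/- Let Q be a finite right Bol loop of odd order. Then the squaring map Q → Q, x ↦ x·x, is a bijection. -/

import Mathlib

/-- A loop: a set with binary operation and identity element in which all left and
right translations are bijective. -/
class QLoop (Q : Type*) extends Mul Q, One Q where
  one_mul : ∀ x : Q, 1 * x = x
  mul_one : ∀ x : Q, x * 1 = x
  bij_left : ∀ a : Q, Function.Bijective (fun x : Q => a * x)
  bij_right : ∀ a : Q, Function.Bijective (fun x : Q => x * a)

/-- The right Bol identity. -/
def IsRightBol (Q : Type*) [QLoop Q] : Prop :=
  ∀ x y z : Q, ((x * y) * z) * y = x * ((y * z) * y)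

/-- Left translation as a permutation. -/
noncomputable def Lt {Q : Type*} [QLoop Q] (a : Q) : Equiv.Perm Q :=
  Equiv.ofBijective (fun x : Q => a * x) (QLoop.bij_left a)

/-- Right translation as a permutation. -/
noncomputable def Rt {Q : Type*} [QLoop Q] (a : Q) : Equiv.Perm Q :=
  Equiv.ofBijective (fun x : Q => x * a) (QLoop.bij_right a)

/-- The right multiplication group. -/
noncomputable def rightMultGroup (Q : Type*) [QLoop Q] : Subgroup (Equiv.Perm Q) :=
  Subgroup.closure (Set.range (Rt : Q → Equiv.Perm Q))

/-- The right inner mapping group, generated by R_{x,y} = R_{y x}⁻¹ ∘ R_x ∘ R_y. -/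
noncomputable def rightInn (Q : Type*) [QLoop Q] : Subgroup (Equiv.Perm Q) :=
  Subgroup.closure { φ : Equiv.Perm Q | ∃ x y : Q, φ = (Rt (y * x))⁻¹ * Rt x * Rt y }

/-- The inner mapping group, generated by R_{x,y}, L_{x,y} and T_x. -/
noncomputable def innGroup (Q : Type*) [QLoop Q] : Subgroup (Equiv.Perm Q) :=
  Subgroup.closure
    ({ φ : Equiv.Perm Q | ∃ x y : Q, φ = (Rt (y * x))⁻¹ * Rt x * Rt y } ∪
     { φ : Equiv.Perm Q | ∃ x y : Q, φ = (Lt (x * y))⁻¹ * Lt x * Lt y } ∪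
     { φ : Equiv.Perm Q | ∃ x : Q, φ = (Lt x)⁻¹ * Rt x })

/-- A subloop: contains 1, closed under multiplication and both divisions. -/
structure IsSubloop {Q : Type*} [QLoop Q] (S : Set Q) : Prop where
  one_mem : (1 : Q) ∈ S
  mul_mem : ∀ ⦃a b : Q⦄, a ∈ S → b ∈ S → a * b ∈ S
  ldiv_mem : ∀ ⦃a x : Q⦄, a ∈ S → a * x ∈ S → x ∈ S
  rdiv_mem : ∀ ⦃a y : Q⦄, a ∈ S → y * a ∈ S → y ∈ S

/-- A normal subloop: a subloop invariant under all inner mappings. -/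
def IsNormalSubloop {Q : Type*} [QLoop Q] (S : Set Q) : Prop :=
  IsSubloop S ∧ ∀ φ ∈ innGroup Q, (φ : Equiv.Perm Q) '' S = S

/-- The commutant. -/
def commutant (Q : Type*) [QLoop Q] : Set Q := { a : Q | ∀ y : Q, a * y = y * a }

/-- The left nucleus. -/
def leftNucleus (Q : Type*) [QLoop Q] : Set Q :=
  { a : Q | ∀ y z : Q, a * (y * z) = (a * y) * z }

/-- The center. -/
def loopCenter (Q : Type*) [QLoop Q] : Set Q :=
  { a : Q | ∀ y z : Q, a * y = y * a ∧ a * (y * z) = (a * y) * z ∧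
      y * (a * z) = (y * a) * z ∧ y * (z * a) = (y * z) * a }

/-- Powers: x^0 = 1, x^{n+1} = x^n * x. -/
def lpow {Q : Type*} [QLoop Q] (x : Q) : ℕ → Q
  | 0 => 1
  | n + 1 => lpow x n * x

/-- The subloop generated by an element. -/
def subloopClosure {Q : Type*} [QLoop Q] (x : Q) : Set Q :=
  ⋂₀ { S : Set Q | IsSubloop S ∧ x ∈ S }

/-- Power associativity: the subloop generated by any element is associative. -/
def PowerAssociative (Q : Type*) [QLoop Q] : Prop :=
  ∀ x : Q, ∀ a ∈ subloopClosure x, ∀ b ∈ subloopClosure x, ∀ c ∈ subloopClosure x,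
    a * (b * c) = (a * b) * c


section

variable {Q : Type*} [QLoop Q]

lemma Rt_apply (a x : Q) : Rt a x = x * a := rfl

lemma Rt_one : Rt (1 : Q) = 1 := by
  ext x
  exact QLoop.mul_one x

end

namespace IsRightBol

variable {Q : Type*} [QLoop Q]

lemma Rt_mul_Rt_mul_Rt (hbol : IsRightBol Q) (x y : Q) :
    Rt x * Rt y * Rt x = Rt ((x * y) * x) := by
  ext a
  exact hbol a x y

/-- `(Rt x ^ n) 1` is the `n`-th power of `x`; stepping by two lets the Bol identity
`R_x R_y R_x = R_{(x y) x}` carry the induction. -/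
lemma Rt_pow_apply_one (hbol : IsRightBol Q) (x : Q) : ∀ n : ℕ, Rt ((Rt x ^ n) 1) = Rt x ^ n
  | 0 => Rt_one
  | 1 => by rw [pow_one, Rt_apply, QLoop.one_mul]
  | n + 2 => by
    have hstep : (Rt x ^ (n + 2)) 1 = (x * (Rt x ^ n) 1) * x := by
      rw [show Rt x ^ (n + 2) = Rt x * Rt x ^ n * Rt x by group, ← Rt_pow_apply_one hbol x n]
      simp only [Equiv.Perm.mul_apply, Rt_apply, QLoop.one_mul]
    rw [hstep, ← hbol.Rt_mul_Rt_mul_Rt, Rt_pow_apply_one hbol x n]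
    group

/-- `Rt z` is an involution of a set of odd size, so it has a fixed point `a`, i.e. `a * z = a`. -/
lemma eq_one_of_mul_self_eq_one [Finite Q] (hbol : IsRightBol Q) (hodd : Odd (Nat.card Q))
    {z : Q} (hz : z * z = 1) : z = 1 := by
  have := Fintype.ofFinite Q
  have hinv : Rt z ^ 2 ^ 1 = 1 := by
    have h := hbol.Rt_mul_Rt_mul_Rt z 1
    rwa [Rt_one, mul_one, QLoop.mul_one, hz, Rt_one, ← sq, ← pow_one 2] at h
  have hodd' : ¬ 2 ∣ Fintype.card Q := by
    rwa [← Nat.card_eq_fintype_card, ← even_iff_two_dvd, Nat.not_even_iff_odd]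
  have : Fact (Nat.Prime 2) := ⟨Nat.prime_two⟩
  obtain ⟨a, ha⟩ := Equiv.Perm.exists_fixed_point_of_prime hodd' hinv
  exact (QLoop.bij_left a).1 (ha.trans (QLoop.mul_one a).symm)

lemma odd_orderOf_Rt [Finite Q] (hbol : IsRightBol Q) (hodd : Odd (Nat.card Q)) (x : Q) :
    Odd (orderOf (Rt x)) := by
  rw [← Nat.not_even_iff_odd]
  rintro ⟨d, hd⟩
  have hd_pos : 0 < d := by have := orderOf_pos (Rt x); omega
  have hsq : (Rt x ^ d) 1 * (Rt x ^ d) 1 = 1 := by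
    rw [← Rt_apply, hbol.Rt_pow_apply_one, ← Equiv.Perm.mul_apply, ← pow_add, ← hd,
      pow_orderOf_eq_one, Equiv.Perm.one_apply]
  have hpow : Rt x ^ d = 1 := by
    rw [← hbol.Rt_pow_apply_one, hbol.eq_one_of_mul_self_eq_one hodd hsq, Rt_one]
  exact pow_ne_one_of_lt_orderOf hd_pos.ne' (by omega) hpow

end IsRightBol

/-- With `Rt x` of odd order `2 * m + 1`, the square root of `x` is its power `x ^ (m + 1)`. -/
theorem stmt16 (Q : Type*) [QLoop Q] [Finite Q] (hbol : IsRightBol Q)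
    (hodd : Odd (Nat.card Q)) :
    Function.Bijective (fun x : Q => x * x) := by
  rw [← Finite.surjective_iff_bijective]
  intro x
  obtain ⟨m, hm⟩ := hbol.odd_orderOf_Rt hodd x
  refine ⟨(Rt x ^ (m + 1)) 1, ?_⟩
  change Rt ((Rt x ^ (m + 1)) 1) ((Rt x ^ (m + 1)) 1) = x
  rw [hbol.Rt_pow_apply_one, ← Equiv.Perm.mul_apply, ← pow_add,
    show m + 1 + (m + 1) = orderOf (Rt x) + 1 by omega, pow_succ, pow_orderOf_eq_one, one_mul,
    Rt_apply, QLoop.one_mul]
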